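/- arXiv:1604.05440 — 2 statements merged into one kernel-verified Lean document; each statement's English description precedes it below -/
import Mathlib

section
/- Let (X,𝔈) be a connected graph with a root ϑ and let λ ∈ (0,1). Suppose a reversible random walk on X (with conductances c and total conductance m) satisfies the constant return ratio condition: for every x ≠ ϑ, c(x,x⁻) = λ · Σ_{y : y⁻ = x} c(x,y), where x⁻ denotes the parent in an underlying spanning tree T = (X,𝔈_v). Then for every finite subset A ⊆ X, the tree-restricted total conductance satisfies m_T(A) ≤ ((1+λ)/(1−λ)) · c_T(∂A), where m_T(x) = c(x,x⁻) + Σ_{y:y⁻=x} c(x,y) (and m_T(ϑ) = Σ_{y:y⁻=ϑ} c(ϑ,y)), ∂A = {(x,y) ∈ 𝔈_v : x ∈ A, y ∉ A}, and c_T(∂A) = Σ_{(x,y) ∈ ∂A} c(x,y). -/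
/-- strong isoperimetric inequality for the tree part of a
reversible walk with constant return ratio λ ∈ (0,1): for every finite A ⊆ X,
m_T(A) ≤ ((1+λ)/(1-λ))·c_T(∂A). -/
theorem stmt11 {X : Type*} [DecidableEq X]
    (ϑ : X) (parent : X → X) (hpϑ : parent ϑ = ϑ)
    (level : X → ℕ) (hlevel0 : level ϑ = 0)
    (hlevel : ∀ x, x ≠ ϑ → level x = level (parent x) + 1)
    (children : X → Finset X)
    (hchildren : ∀ x y, y ∈ children x ↔ parent y = x ∧ y ≠ ϑ)
    (c : X → X → ℝ) (hcsym : ∀ x y, c x y = c y x) (hcnn : ∀ x y, 0 ≤ c x y)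
    (lam : ℝ) (hlam0 : 0 < lam) (hlam1 : lam < 1)
    (hret : ∀ x, x ≠ ϑ → c x (parent x) = lam * ∑ y ∈ children x, c x y)
    (mT : X → ℝ)
    (hmT : ∀ x, mT x =
      (if x = ϑ then 0 else c x (parent x)) + ∑ y ∈ children x, c x y)
    (A : Finset X) :
    ∑ x ∈ A, mT x ≤ (1 + lam) / (1 - lam) *
      ∑ x ∈ A, ((if x ≠ ϑ ∧ parent x ∉ A then c x (parent x) else 0) +
        ∑ y ∈ (children x).filter (fun y => y ∉ A), c x y) := by
  set S : X → ℝ := fun x => ∑ y ∈ children x, c x y with hSdef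
  have hSnn : ∀ x, 0 ≤ S x := fun x => Finset.sum_nonneg fun y _ => hcnn x y
  set O : ℝ := ∑ x ∈ A, ∑ y ∈ (children x).filter (fun y => y ∉ A), c x y with hOdef
  have hOnn : 0 ≤ O :=
    Finset.sum_nonneg fun x _ => Finset.sum_nonneg fun y _ => hcnn x y
  have hNnn : 0 ≤ ∑ x ∈ A, S x := Finset.sum_nonneg fun x _ => hSnn x
  -- split S over membership in A
  have hsplit : ∑ x ∈ A, S x =
      (∑ x ∈ A, ∑ y ∈ (children x).filter (fun y => y ∈ A), c x y) + O := by
    rw [← Finset.sum_add_distrib]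
    refine Finset.sum_congr rfl fun x _ => ?_
    exact (Finset.sum_filter_add_sum_filter_not (children x) (fun y => y ∈ A) _).symm
  -- internal edges bound
  have hint : (∑ x ∈ A, ∑ y ∈ (children x).filter (fun y => y ∈ A), c x y)
      ≤ lam * ∑ x ∈ A, S x := by
    have hre : ∀ x ∈ A, ∑ y ∈ (children x).filter (fun y => y ∈ A), c x y
        = ∑ y ∈ A, if y ∈ children x then c x y else 0 := by
      intro x _
      rw [show (children x).filter (fun y => y ∈ A) = A.filter (fun y => y ∈ children x) by
        ext y; simp [and_comm], Finset.sum_filter]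
    calc (∑ x ∈ A, ∑ y ∈ (children x).filter (fun y => y ∈ A), c x y)
        = ∑ x ∈ A, ∑ y ∈ A, if y ∈ children x then c x y else 0 :=
          Finset.sum_congr rfl hre
      _ = ∑ y ∈ A, ∑ x ∈ A, if y ∈ children x then c x y else 0 := Finset.sum_comm
      _ ≤ ∑ y ∈ A, lam * S y := by
          refine Finset.sum_le_sum fun y _ => ?_
          by_cases hy : y = ϑ
          · have : ∀ x ∈ A, (if y ∈ children x then c x y else 0) = 0 := by
              intro x _
              simp [hchildren, hy]
            rw [Finset.sum_congr rfl this, Finset.sum_const_zero]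
            exact mul_nonneg hlam0.le (hSnn y)
          · have heq : ∀ x ∈ A, (if y ∈ children x then c x y else 0)
                = if x = parent y then c x y else 0 := by
              intro x _
              congr 1
              rw [hchildren]
              simp [hy, eq_comm]
            rw [Finset.sum_congr rfl heq, Finset.sum_ite_eq' A (parent y) (fun x => c x y)]
            by_cases hpA : parent y ∈ A
            · rw [if_pos hpA, hcsym, hret y hy]
            · rw [if_neg hpA]
              exact mul_nonneg hlam0.le (hSnn y)
      _ = lam * ∑ x ∈ A, S x := by rw [Finset.mul_sum]
  -- (1-λ) N ≤ O
  have hNO : (1 - lam) * ∑ x ∈ A, S x ≤ O := by nlinarith [hsplit, hint]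
  -- ∑ mT ≤ (1+λ) N
  have hmTN : ∑ x ∈ A, mT x ≤ (1 + lam) * ∑ x ∈ A, S x := by
    rw [Finset.mul_sum]
    refine Finset.sum_le_sum fun x _ => ?_
    rw [hmT x]
    show (if x = ϑ then 0 else c x (parent x)) + S x ≤ (1 + lam) * S x
    by_cases hx : x = ϑ
    · rw [if_pos hx]
      nlinarith [hSnn x]
    · rw [if_neg hx, hret x hx]
      show lam * S x + S x ≤ (1 + lam) * S x
      nlinarith [hSnn x]
  -- boundary ≥ O
  have hBO : O ≤ ∑ x ∈ A, ((if x ≠ ϑ ∧ parent x ∉ A then c x (parent x) else 0) +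
        ∑ y ∈ (children x).filter (fun y => y ∉ A), c x y) := by
    rw [hOdef]
    refine Finset.sum_le_sum fun x _ => ?_
    have : (0:ℝ) ≤ if x ≠ ϑ ∧ parent x ∉ A then c x (parent x) else 0 := by
      split <;> [exact hcnn _ _; exact le_refl 0]
    linarith
  have hd : (0:ℝ) < 1 - lam := by linarith
  have hK : (0:ℝ) ≤ (1 + lam) / (1 - lam) := by positivity
  calc ∑ x ∈ A, mT x ≤ (1 + lam) * ∑ x ∈ A, S x := hmTN
    _ = (1 + lam) / (1 - lam) * ((1 - lam) * ∑ x ∈ A, S x) := by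
        field_simp
    _ ≤ (1 + lam) / (1 - lam) * O := by
        exact mul_le_mul_of_nonneg_left hNO hK
    _ ≤ _ := mul_le_mul_of_nonneg_left hBO hK
end

section
/- Let {S_i}_{i=1}^N be an IFS satisfying the open set condition, with α determined by Σ r_i^α = 1, r = min_i r_i, and levels 𝒥_n as above. Suppose a λ-quasi-natural random walk exists with weights {p_i}: c(x,x⁻) = p_x λ^{−|x|} and there is M ≥ 1 with M⁻¹ ≤ c(x,y) ≤ M for all edges (strict reversibility). Then, using #𝒥_m ∈ [r^{−αm}, r^{−α(m+1)}) and c(𝒥_{m+1}) = λ^{−m}·m(ϑ) where c(𝒥_m) = Σ_{x∈𝒥_m} c(x,x⁻), it follows that λ = r^α. -/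
/-! Write `q = r ^ α`. Strict reversibility pins the total conductance of level `m + 1` between
multiples of `#𝒥_{m+1} ≍ q^{-m}`, while the return-ratio condition makes it `λ^{-m} m(ϑ)`. Hence
`(λ / q) ^ m` stays in a fixed compact subinterval of `(0, ∞)` for all `m`, which forces
`λ / q = 1`. -/

lemma eq_one_of_forall_pow_mem_Icc {t a b : ℝ} (ha : 0 < a)
    (h : ∀ m : ℕ, a ≤ t ^ m ∧ t ^ m ≤ b) : t = 1 := by
  have ht : 0 < t := ha.trans_le (by simpa using (h 1).1)
  rcases lt_trichotomy t 1 with ht1 | ht1 | ht1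
  · obtain ⟨n, hn⟩ := exists_pow_lt_of_lt_one ha ht1
    exact absurd (h n).1 hn.not_ge
  · exact ht1
  · obtain ⟨n, hn⟩ := pow_unbounded_of_one_lt b ht1
    exact absurd (h n).2 hn.not_ge

lemma Real.rpow_neg_mul_natCast {r : ℝ} (hr : 0 ≤ r) (α : ℝ) (m : ℕ) :
    r ^ (-(α * m)) = ((r ^ α) ^ m)⁻¹ := by
  rw [Real.rpow_neg hr, Real.rpow_mul hr, Real.rpow_natCast]

lemma div_pow_mem_Icc_of_inv_mul_bounds {lam q M c N : ℝ} (hlam : 0 < lam) (hq : 0 < q)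
    (hM : 0 < M) (m : ℕ) (hN : (q ^ (m + 1))⁻¹ ≤ N ∧ N < (q ^ (m + 2))⁻¹)
    (hc : M⁻¹ * N ≤ (lam ^ m)⁻¹ * c ∧ (lam ^ m)⁻¹ * c ≤ M * N) :
    c * q ^ 2 / M ≤ (lam / q) ^ m ∧ (lam / q) ^ m ≤ M * c * q := by
  have hq_m : 0 < q ^ m := pow_pos hq m
  have lower : lam ^ m ≤ M * c * q ^ (m + 1) := by
    have h := le_trans (mul_le_mul_of_nonneg_left hN.1 (inv_pos.2 hM).le) hc.1
    field_simp at h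
    linarith
  have upper : c * q ^ (m + 2) ≤ M * lam ^ m := by
    have h := hc.2.trans (mul_le_mul_of_nonneg_left hN.2.le hM.le)
    field_simp at h
    linarith
  rw [div_pow, div_le_div_iff₀ hM hq_m, div_le_iff₀ hq_m]
  constructor
  · calc c * q ^ 2 * q ^ m = c * q ^ (m + 2) := by ring
      _ ≤ M * lam ^ m := upper
      _ = lam ^ m * M := mul_comm _ _
  · calc lam ^ m ≤ M * c * q ^ (m + 1) := lower
      _ = M * c * q * q ^ m := by ring

theorem stmt15_general (lam r α M mϑ : ℝ)
    (hlam0 : 0 < lam) (hr0 : 0 < r)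
    (hM : 1 ≤ M) (hmϑ : 0 < mϑ)
    (cardJ : ℕ → ℕ) (cJ : ℕ → ℝ)
    (hcard : ∀ m : ℕ, r ^ (-(α * (m : ℝ))) ≤ (cardJ m : ℝ) ∧
      (cardJ m : ℝ) < r ^ (-(α * ((m : ℝ) + 1))))
    (hcJ : ∀ m : ℕ, cJ (m + 1) = lam ^ (-(m : ℝ)) * mϑ)
    (hbound : ∀ m : ℕ, M⁻¹ * (cardJ m : ℝ) ≤ cJ m ∧ cJ m ≤ M * (cardJ m : ℝ)) :
    lam = r ^ α := by
  set q := r ^ α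
  have hq : 0 < q := Real.rpow_pos_of_pos hr0 α
  have hM0 : 0 < M := one_pos.trans_le hM
  have hcard_pow (m : ℕ) : (q ^ m)⁻¹ ≤ cardJ m ∧ (cardJ m : ℝ) < (q ^ (m + 1))⁻¹ := by
    have h := hcard m
    rwa [← Nat.cast_succ, Real.rpow_neg_mul_natCast hr0.le, Real.rpow_neg_mul_natCast hr0.le]
      at h
  have hcJ_pow (m : ℕ) : cJ (m + 1) = (lam ^ m)⁻¹ * mϑ := by
    rw [hcJ, Real.rpow_neg hlam0.le, Real.rpow_natCast]
  have hratio : lam / q = 1 := by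
    refine eq_one_of_forall_pow_mem_Icc (a := mϑ * q ^ 2 / M) (b := M * mϑ * q) (by positivity)
      fun m => div_pow_mem_Icc_of_inv_mul_bounds hlam0 hq hM0 m (hcard_pow (m + 1)) ?_
    rw [← hcJ_pow]
    exact hbound (m + 1)
  exact (div_eq_one_iff_eq hq.ne').mp hratio

/-- if a λ-quasi-natural random walk is strictly reversible
(all conductances in [M⁻¹, M]), then, using r^{-αm} ≤ #𝒥_m < r^{-α(m+1)} and
c(𝒥_{m+1}) = λ^{-m}·m(ϑ), necessarily λ = r^α. -/
theorem stmt15 (lam r α M mϑ : ℝ)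
    (hlam0 : 0 < lam) (hlam1 : lam < 1) (hr0 : 0 < r) (hr1 : r < 1)
    (hα : 0 < α) (hM : 1 ≤ M) (hmϑ : 0 < mϑ)
    (cardJ : ℕ → ℕ) (cJ : ℕ → ℝ)
    (hcard : ∀ m : ℕ, r ^ (-(α * (m : ℝ))) ≤ (cardJ m : ℝ) ∧
      (cardJ m : ℝ) < r ^ (-(α * ((m : ℝ) + 1))))
    (hcJ : ∀ m : ℕ, cJ (m + 1) = lam ^ (-(m : ℝ)) * mϑ)
    (hbound : ∀ m : ℕ, M⁻¹ * (cardJ m : ℝ) ≤ cJ m ∧ cJ m ≤ M * (cardJ m : ℝ)) :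
    lam = r ^ α :=
  stmt15_general lam r α M mϑ hlam0 hr0 hM hmϑ cardJ cJ hcard hcJ hbound
end
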